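/- arXiv:2310.01793 — 9 statements merged into one kernel-verified Lean document; each statement's English description precedes it below -/
import Mathlib

section
/- Let G be a finite group, S an inverse-closed subset of G∖{e}, and k a positive integer. If Cay(G,S) admits a subgroup (0,k)-regular set, then k divides |S|. -/
open Set

/-- An `(a,b)`-regular set in a graph: a nonempty proper subset `D` of the vertex set such
that every vertex in `D` has exactly `a` neighbours in `D` and every vertex outside `D`
has exactly `b` neighbours in `D`. -/
def IsRegularSet {V : Type*} (G : SimpleGraph V) (D : Set V) (a b : ℕ) : Prop :=
  D.Nonempty ∧ D ≠ Set.univ ∧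
    (∀ v ∈ D, {u | G.Adj v u ∧ u ∈ D}.ncard = a) ∧
    (∀ v ∉ D, {u | G.Adj v u ∧ u ∈ D}.ncard = b)

/-- The Cayley graph of a group with connection set `S`: `x ~ y` iff `y * x⁻¹ ∈ S`
(stated symmetrically; when `S` is inverse-closed and `1 ∉ S` this is the usual notion). -/
def cayley {G : Type*} [Group G] (S : Set G) : SimpleGraph G where
  Adj x y := x ≠ y ∧ y * x⁻¹ ∈ S ∧ x * y⁻¹ ∈ S
  symm := ⟨fun x y h => ⟨h.1.symm, h.2.2, h.2.1⟩⟩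
  loopless := ⟨fun x h => h.1 rfl⟩

/-!
The neighbours in `H` of a vertex `v` are the elements `s⁻¹ * v` with `s ∈ S ∩ vH`, so `S`
meets each left coset `vH` in as many elements as `v` has neighbours in `H`: none if `v ∈ H`
(independence), `k` otherwise. Summing over the cosets gives `k ∣ |S|`.
-/

theorem Set.dvd_ncard_of_forall_dvd_ncard_fiber {α β : Type*} {s : Set α} (f : α → β) {k : ℕ}
    (h : ∀ b, k ∣ {a ∈ s | f a = b}.ncard) : k ∣ s.ncard := by
  classical
  rcases s.finite_or_infinite with hs | hs
  · lift s to Finset α using hs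
    rw [ncard_coe_finset, Finset.card_eq_sum_card_image f]
    refine Finset.dvd_sum fun b _ => ?_
    rw [← ncard_coe_finset, Finset.coe_filter]
    exact h b
  · rw [hs.ncard]
    exact dvd_zero k

theorem cayley_neighbors_in_subgroup_eq_image {G : Type*} [Group G] {S : Set G}
    (hS1 : (1 : G) ∉ S) (hSinv : ∀ s ∈ S, s⁻¹ ∈ S) (H : Subgroup G) (v : G) :
    {u | (cayley S).Adj v u ∧ u ∈ (H : Set G)} =
      (fun s => s⁻¹ * v) '' {s ∈ S | (s : G ⧸ H) = v} := by
  ext u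
  constructor
  · rintro ⟨⟨-, -, hvu⟩, hu⟩
    refine ⟨v * u⁻¹, ⟨hvu, QuotientGroup.eq.mpr ?_⟩, by group⟩
    simpa using hu
  · rintro ⟨s, ⟨hs, hsv⟩, rfl⟩
    refine ⟨⟨fun hv => hS1 ?_, ?_, ?_⟩, QuotientGroup.eq.mp hsv⟩
    · obtain rfl : s = 1 := by simpa using congrArg (· * v⁻¹) hv
      exact hs
    · simpa using hSinv s hs
    · simpa using hs

theorem ncard_cayley_neighbors_in_subgroup {G : Type*} [Group G] {S : Set G}
    (hS1 : (1 : G) ∉ S) (hSinv : ∀ s ∈ S, s⁻¹ ∈ S) (H : Subgroup G) (v : G) :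
    {u | (cayley S).Adj v u ∧ u ∈ (H : Set G)}.ncard = {s ∈ S | (s : G ⧸ H) = v}.ncard := by
  rw [cayley_neighbors_in_subgroup_eq_image hS1 hSinv]
  exact ncard_image_of_injective _ fun a b hab => by simpa using hab

theorem stmt2_general {G : Type*} [Group G] (S : Set G)
    (hS1 : (1 : G) ∉ S) (hSinv : ∀ s ∈ S, s⁻¹ ∈ S) (k : ℕ)
    (h : ∃ H : Subgroup G, IsRegularSet (cayley S) (H : Set G) 0 k) :
    k ∣ S.ncard := by
  obtain ⟨H, -, -, hin, hout⟩ := h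
  refine S.dvd_ncard_of_forall_dvd_ncard_fiber (QuotientGroup.mk : G → G ⧸ H) fun q => ?_
  obtain ⟨v, rfl⟩ := QuotientGroup.mk_surjective q
  rw [← ncard_cayley_neighbors_in_subgroup hS1 hSinv H v]
  by_cases hv : v ∈ H
  · rw [hin v hv]
    exact dvd_zero k
  · rw [hout v hv]

theorem stmt2 {G : Type*} [Group G] [Fintype G] (S : Set G)
    (hS1 : (1 : G) ∉ S) (hSinv : ∀ s ∈ S, s⁻¹ ∈ S) (k : ℕ) (hk : 1 ≤ k)
    (h : ∃ H : Subgroup G, IsRegularSet (cayley S) (H : Set G) 0 k) :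
    k ∣ S.ncard :=
  stmt2_general S hS1 hSinv k h
end

section
/- Let G be a finite group, H a proper subgroup of G, S an inverse-closed subset of G∖{e}, and k a positive integer. If H is a (0,k)-regular set in Cay(G,S), then there exists a subset L of S with |L| = |G:H| − 1 such that L ∪ {e} is a left transversal of H in G. -/
open Set

/-- A left transversal of `H` in `G`: a set containing exactly one element of each left
coset of `H`. -/
def IsLeftTransversal {G : Type*} [Group G] (H : Subgroup G) (T : Set G) : Prop :=
  ∀ g : G, ∃! t, t ∈ T ∧ t⁻¹ * g ∈ H

/-!
Since `k ≥ 1`, every vertex `g ∉ H` has a neighbour `h ∈ H`, so `s = g h⁻¹ ∈ S` and `s⁻¹ g = h ∈ H`: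
every nontrivial left coset of `H` meets `S`. Choosing one such element of `S` in each nontrivial
coset, and `1` in `H` itself, gives the transversal.
-/

theorem IsRegularSet.exists_adj_mem {V : Type*} {Γ : SimpleGraph V} {D : Set V} {a b : ℕ}
    (h : IsRegularSet Γ D a b) (hb : b ≠ 0) {v : V} (hv : v ∉ D) : ∃ u ∈ D, Γ.Adj v u := by
  obtain ⟨u, hadj, hu⟩ := nonempty_of_ncard_ne_zero ((h.2.2.2 v hv).trans_ne hb)
  exact ⟨u, hu, hadj⟩

section Transversal

variable {G : Type*} [Group G] (H : Subgroup G)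

theorem isLeftTransversal_range {σ : G ⧸ H → G} (hσ : ∀ q, (σ q : G ⧸ H) = q) :
    IsLeftTransversal H (range σ) := by
  intro g
  refine ⟨σ g, ⟨mem_range_self _, QuotientGroup.eq.mp (hσ g)⟩, ?_⟩
  rintro _ ⟨⟨q, rfl⟩, hq⟩
  rw [← QuotientGroup.eq.mpr hq, hσ]

theorem exists_subset_isLeftTransversal_union_one (T : Set G)
    (hT : ∀ g ∉ H, ∃ t ∈ T, t⁻¹ * g ∈ H) :
    ∃ L ⊆ T, L.ncard = H.index - 1 ∧ IsLeftTransversal H (L ∪ {1}) := by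
  set q₁ : G ⧸ H := ((1 : G) : G ⧸ H)
  have hrep : ∀ q : G ⧸ H, ∃ g : G, (g : G ⧸ H) = q ∧ (q = q₁ → g = 1) ∧ (q ≠ q₁ → g ∈ T) := by
    intro q
    obtain ⟨g, rfl⟩ := QuotientGroup.mk_surjective q
    by_cases hg : (g : G ⧸ H) = q₁
    · exact ⟨1, hg.symm, fun _ => rfl, fun h => (h hg).elim⟩
    · have hgH : g ∉ H := fun hgH => hg (QuotientGroup.eq.mpr (by simpa using hgH))
      obtain ⟨t, htT, htg⟩ := hT g hgH
      exact ⟨t, QuotientGroup.eq.mpr htg, fun h => (hg h).elim, fun _ => htT⟩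
  choose σ hσ hσ1 hσT using hrep
  have hσinj : σ.Injective := Function.LeftInverse.injective hσ
  have hrange : σ '' (univ \ {q₁}) ∪ {σ q₁} = range σ := by
    rw [← image_singleton (f := σ), ← image_union, sdiff_union_self, univ_union, image_univ]
  rw [hσ1 q₁ rfl] at hrange
  refine ⟨σ '' (univ \ {q₁}), ?_, ?_, hrange ▸ isLeftTransversal_range H hσ⟩
  · rintro _ ⟨q, hq, rfl⟩
    exact hσT q hq.2
  · rw [ncard_image_of_injective _ hσinj, ncard_sdiff_singleton_of_mem (mem_univ _),
      ncard_univ, Subgroup.index_eq_card]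

end Transversal

theorem stmt3_general {G : Type*} [Group G] (H : Subgroup G)
    (S : Set G) (k : ℕ) (hk : 1 ≤ k)
    (h : IsRegularSet (cayley S) (H : Set G) 0 k) :
    ∃ L ⊆ S, L.ncard = H.index - 1 ∧ IsLeftTransversal H (L ∪ {1}) := by
  refine exists_subset_isLeftTransversal_union_one H S fun g hg => ?_
  obtain ⟨u, hu, hadj⟩ := h.exists_adj_mem (by omega) hg
  exact ⟨g * u⁻¹, hadj.2.2, by simpa using hu⟩

theorem stmt3 {G : Type*} [Group G] [Fintype G] (H : Subgroup G) (hH : H ≠ ⊤)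
    (S : Set G) (hS1 : (1 : G) ∉ S) (hSinv : ∀ s ∈ S, s⁻¹ ∈ S) (k : ℕ) (hk : 1 ≤ k)
    (h : IsRegularSet (cayley S) (H : Set G) 0 k) :
    ∃ L ⊆ S, L.ncard = H.index - 1 ∧ IsLeftTransversal H (L ∪ {1}) :=
  stmt3_general H S k hk h
end

section
/- Let G be a finite group, H a proper subgroup, S ⊆ G∖{e} inverse-closed, and k ≥ 1. If H is a (0,k)-regular set in Cay(G,S), then for any k+1 distinct elements s₁,…,s_{k+1} of S, one has s₁H ∩ s₂H ∩ ⋯ ∩ s_{k+1}H = ∅. -/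
open Set Pointwise

/-! A point `x` of `⋂ i, s i • H` has the `k + 1` distinct neighbours `(s i)⁻¹ * x` in `H`,
while a `(0, k)`-regular set gives every vertex at most `k` neighbours inside it. -/

theorem IsRegularSet.ncard_adj_mem_le {V : Type*} [Finite V] {G : SimpleGraph V} {D : Set V}
    {a b : ℕ} (h : IsRegularSet G D a b) (v : V) :
    {u | G.Adj v u ∧ u ∈ D}.ncard ≤ max a b := by
  by_cases hv : v ∈ D
  · exact h.2.2.1 v hv ▸ le_max_left a b
  · exact h.2.2.2 v hv ▸ le_max_right a b

theorem IsRegularSet.not_injective_of_adj_mem {V ι : Type*} [Finite V] {G : SimpleGraph V}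
    {D : Set V} {a b : ℕ} (h : IsRegularSet G D a b) {v : V} {f : ι → V}
    (hf : ∀ i, G.Adj v (f i) ∧ f i ∈ D) (hcard : max a b < Nat.card ι) :
    ¬ Function.Injective f := by
  intro hinj
  have hrange : range f ⊆ {u | G.Adj v u ∧ u ∈ D} := by
    rintro _ ⟨i, rfl⟩
    exact hf i
  have := (ncard_le_ncard hrange).trans (h.ncard_adj_mem_le v)
  rw [ncard_range_of_injective hinj] at this
  omega

theorem cayley_adj_inv_mul_iff {G : Type*} [Group G] (S : Set G) (s x : G) :
    (cayley S).Adj x (s⁻¹ * x) ↔ s ≠ 1 ∧ s⁻¹ ∈ S ∧ s ∈ S := by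
  simp [cayley, eq_comm (a := x), mul_inv_rev]

theorem stmt4_general {G : Type*} [Group G] [Fintype G] (H : Subgroup G)
    (S : Set G) (hS1 : (1 : G) ∉ S) (hSinv : ∀ s ∈ S, s⁻¹ ∈ S) (k : ℕ)
    (h : IsRegularSet (cayley S) (H : Set G) 0 k)
    (s : Fin (k + 1) → G) (hinj : Function.Injective s) (hs : ∀ i, s i ∈ S) :
    (⋂ i, s i • (H : Set G)) = ∅ := by
  refine eq_empty_iff_forall_notMem.2 fun x hx => ?_
  simp only [mem_iInter, mem_smul_set_iff_inv_smul_mem, smul_eq_mul] at hx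
  have hadj (i : Fin (k + 1)) : (cayley S).Adj x ((s i)⁻¹ * x) :=
    (cayley_adj_inv_mul_iff S (s i) x).2
      ⟨fun h1 => hS1 (h1 ▸ hs i), hSinv _ (hs i), hs i⟩
  exact h.not_injective_of_adj_mem (f := fun i => (s i)⁻¹ * x) (fun i => ⟨hadj i, hx i⟩)
    (by simp) fun i j hij => hinj (inv_injective (mul_right_cancel hij))

theorem stmt4 {G : Type*} [Group G] [Fintype G] (H : Subgroup G) (hH : H ≠ ⊤)
    (S : Set G) (hS1 : (1 : G) ∉ S) (hSinv : ∀ s ∈ S, s⁻¹ ∈ S) (k : ℕ) (hk : 1 ≤ k)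
    (h : IsRegularSet (cayley S) (H : Set G) 0 k)
    (s : Fin (k + 1) → G) (hinj : Function.Injective s) (hs : ∀ i, s i ∈ S) :
    (⋂ i, s i • (H : Set G)) = ∅ :=
  stmt4_general H S hS1 hSinv k h s hinj hs
end

section
/- Let G be a finite group, H a proper subgroup, S ⊆ G∖{e} inverse-closed, and k ≥ 1. Then H is a (0,k)-regular set in Cay(G,S) if and only if S can be partitioned into k parts L₁,…,L_k such that each Lᵢ ∪ {e} is a left transversal of H in G. -/
/-!
For `v : G`, the map `u ↦ v * u⁻¹` sends the neighbours of `v` that lie in `H` bijectively onto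
`S ∩ vH`. Hence `H` is `(0,k)`-regular iff `S` avoids `H` and meets every other left coset of `H`
in exactly `k` elements. The same condition characterises the partitions in question: each
`Lᵢ ∪ {1}` being a transversal means that `Lᵢ` avoids `H` and picks exactly one element from each
other coset, and conversely, enumerating every `S ∩ gH` as `s_{g,1}, …, s_{g,k}` yields the parts
`Lᵢ = {s_{g,i}}`.
-/

open Set

section Sections

variable {α β ι : Type*} (f : α → β)

theorem forall_existsUnique_mem_union_singleton_iff {T : Set α} {a₀ : α} (ha₀ : a₀ ∉ T) :
    (∀ b, ∃! a, a ∈ T ∪ {a₀} ∧ f a = b) ↔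
      MapsTo f T {f a₀}ᶜ ∧ ∀ b ∈ ({f a₀}ᶜ : Set β), ∃! a, a ∈ T ∧ f a = b := by
  constructor
  · intro h
    refine ⟨fun t ht hft => ha₀ ?_, fun b hb => ?_⟩
    · rwa [← (h (f a₀)).unique ⟨Or.inl ht, hft⟩ ⟨Or.inr rfl, rfl⟩]
    · obtain ⟨a, ⟨ha | rfl, hfa⟩, huniq⟩ := h b
      · exact ⟨a, ⟨ha, hfa⟩, fun a' ha' => huniq a' ⟨Or.inl ha'.1, ha'.2⟩⟩
      · exact absurd hfa.symm hb
  · rintro ⟨hT, hsec⟩ b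
    by_cases hb : b = f a₀
    · subst hb
      refine ⟨a₀, ⟨Or.inr rfl, rfl⟩, ?_⟩
      rintro a ⟨ha | rfl, hfa⟩
      · exact absurd hfa (hT ha)
      · rfl
    · obtain ⟨a, ha, huniq⟩ := hsec b hb
      refine ⟨a, ⟨Or.inl ha.1, ha.2⟩, ?_⟩
      rintro a' ⟨ha' | rfl, hfa'⟩
      · exact huniq a' ⟨ha', hfa'⟩
      · exact absurd hfa'.symm hb

theorem exists_partition_union_singleton_iff {S : Set α} {a₀ : α} (ha₀ : a₀ ∉ S) :
    (∃ L : ι → Set α, (Pairwise fun i j => Disjoint (L i) (L j)) ∧ ⋃ i, L i = S ∧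
        ∀ i b, ∃! a, a ∈ L i ∪ {a₀} ∧ f a = b) ↔
      MapsTo f S {f a₀}ᶜ ∧ ∃ L : ι → Set α, (Pairwise fun i j => Disjoint (L i) (L j)) ∧
        ⋃ i, L i = S ∧ ∀ i, ∀ b ∈ ({f a₀}ᶜ : Set β), ∃! a, a ∈ L i ∧ f a = b := by
  have key : ∀ L : ι → Set α, ⋃ i, L i = S → ∀ i, ((∀ b, ∃! a, a ∈ L i ∪ {a₀} ∧ f a = b) ↔
      MapsTo f (L i) {f a₀}ᶜ ∧ ∀ b ∈ ({f a₀}ᶜ : Set β), ∃! a, a ∈ L i ∧ f a = b) :=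
    fun L hL i => forall_existsUnique_mem_union_singleton_iff f
      fun h => ha₀ (hL ▸ mem_iUnion_of_mem i h)
  constructor
  · rintro ⟨L, hdisj, hL, htr⟩
    simp only [key L hL] at htr
    exact ⟨hL ▸ mapsTo_iUnion.mpr fun i => (htr i).1, L, hdisj, hL, fun i => (htr i).2⟩
  · rintro ⟨hS, L, hdisj, hL, hsec⟩
    refine ⟨L, hdisj, hL, fun i => (key L hL i).mpr ⟨?_, hsec i⟩⟩
    exact hS.mono_left (hL ▸ subset_iUnion L i)

theorem ncard_fiber_eq_of_partition {S : Set α} {B : Set β} {L : ι → Set α}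
    (hdisj : Pairwise fun i j => Disjoint (L i) (L j)) (hL : ⋃ i, L i = S)
    (hsec : ∀ i, ∀ b ∈ B, ∃! a, a ∈ L i ∧ f a = b) {b : β} (hb : b ∈ B) :
    {a ∈ S | f a = b}.ncard = Nat.card ι := by
  choose t ht huniq using fun i => hsec i b hb
  have ht_inj : Function.Injective t := by
    intro i j hij
    by_contra hne
    exact (hdisj hne).notMem_of_mem_left (ht i).1 (hij ▸ (ht j).1)
  have hfiber : {a ∈ S | f a = b} = range t := by
    ext a
    constructor
    · rintro ⟨haS, rfl⟩
      obtain ⟨i, hi⟩ := mem_iUnion.mp (hL ▸ haS)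
      exact ⟨i, (huniq i a ⟨hi, rfl⟩).symm⟩
    · rintro ⟨i, rfl⟩
      exact ⟨hL ▸ mem_iUnion_of_mem i (ht i).1, (ht i).2⟩
  rw [hfiber, ncard_range_of_injective ht_inj]

theorem exists_partition_of_ncard_fiber [Finite α] [Finite ι] {S : Set α} {B : Set β}
    (hS : MapsTo f S B) (hcard : ∀ b ∈ B, {a ∈ S | f a = b}.ncard = Nat.card ι) :
    ∃ L : ι → Set α, (Pairwise fun i j => Disjoint (L i) (L j)) ∧ ⋃ i, L i = S ∧
      ∀ i, ∀ b ∈ B, ∃! a, a ∈ L i ∧ f a = b := by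
  have hφ : ∀ b : B, ∃ φ : ι → α, Function.Injective φ ∧ range φ = {a ∈ S | f a = b} := by
    intro ⟨b, hb⟩
    obtain ⟨e⟩ := Finite.card_eq.mp ((Nat.card_coe_set_eq _).trans (hcard b hb))
    exact ⟨(↑) ∘ e.symm, Subtype.val_injective.comp e.symm.injective,
      by rw [range_comp, e.symm.range_eq_univ, image_univ, Subtype.range_coe]⟩
  choose φ hφ_inj hφ_range using hφ
  have hφ_mem : ∀ b i, φ b i ∈ S ∧ f (φ b i) = b := fun b i => by
    have := mem_range_self (f := φ b) i
    rwa [hφ_range] at this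
  refine ⟨fun i => range fun b => φ b i, ?_, ?_, ?_⟩
  · intro i j hij
    refine disjoint_left.mpr ?_
    rintro _ ⟨b, rfl⟩ ⟨b', hb'⟩
    have hbb' : b' = b := Subtype.ext <| by
      rw [← (hφ_mem b' j).2, ← (hφ_mem b i).2]
      exact congrArg f hb'
    subst hbb'
    exact hij (hφ_inj b' hb').symm
  · ext a
    refine ⟨fun ha => ?_, fun ha => ?_⟩
    · obtain ⟨i, b, rfl⟩ := mem_iUnion.mp ha
      exact (hφ_mem b i).1
    · have : a ∈ range (φ ⟨f a, hS ha⟩) := by rw [hφ_range]; exact ⟨ha, rfl⟩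
      obtain ⟨i, hi⟩ := this
      exact mem_iUnion.mpr ⟨i, _, hi⟩
  · intro i b hb
    refine ⟨φ ⟨b, hb⟩ i, ⟨⟨_, rfl⟩, (hφ_mem _ i).2⟩, ?_⟩
    rintro _ ⟨⟨b', rfl⟩, hfb'⟩
    obtain rfl : b' = ⟨b, hb⟩ := Subtype.ext ((hφ_mem b' i).2.symm.trans hfb')
    rfl

theorem exists_partition_iff_ncard_fiber [Finite α] [Finite ι] {S : Set α} {B : Set β}
    (hS : MapsTo f S B) :
    (∃ L : ι → Set α, (Pairwise fun i j => Disjoint (L i) (L j)) ∧ ⋃ i, L i = S ∧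
        ∀ i, ∀ b ∈ B, ∃! a, a ∈ L i ∧ f a = b) ↔
      ∀ b ∈ B, {a ∈ S | f a = b}.ncard = Nat.card ι :=
  ⟨fun ⟨_, hdisj, hL, hsec⟩ _ hb => ncard_fiber_eq_of_partition f hdisj hL hsec hb,
    exists_partition_of_ncard_fiber f hS⟩

end Sections

section Cayley

variable {G : Type*} [Group G] {H : Subgroup G} {S : Set G}

theorem isLeftTransversal_iff {T : Set G} :
    IsLeftTransversal H T ↔ ∀ q : G ⧸ H, ∃! t, t ∈ T ∧ (t : G ⧸ H) = q := by
  simp only [IsLeftTransversal, QuotientGroup.forall_mk, QuotientGroup.eq]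

theorem ncard_cayley_adj_mem_subgroup (hS1 : (1 : G) ∉ S) (hSinv : ∀ s ∈ S, s⁻¹ ∈ S) (v : G) :
    {u | (cayley S).Adj v u ∧ u ∈ (H : Set G)}.ncard = {s ∈ S | (s : G ⧸ H) = v}.ncard := by
  have hneigh : {u | (cayley S).Adj v u ∧ u ∈ (H : Set G)} =
      (fun s => s⁻¹ * v) '' {s ∈ S | (s : G ⧸ H) = v} := by
    ext u
    constructor
    · rintro ⟨⟨-, -, hvu⟩, hu⟩
      refine ⟨v * u⁻¹, ⟨hvu, QuotientGroup.eq.mpr ?_⟩, by group⟩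
      simpa [mul_assoc] using hu
    · rintro ⟨s, ⟨hs, hsv⟩, rfl⟩
      refine ⟨⟨?_, by simpa using hSinv s hs, by simpa using hs⟩, QuotientGroup.eq.mp hsv⟩
      intro hv
      obtain rfl : s = 1 := by simpa using hv
      exact hS1 hs
  rw [hneigh, ncard_image_of_injective _ fun a b h => inv_injective (mul_right_cancel h)]

theorem isRegularSet_cayley_subgroup_iff [Finite G] (hH : H ≠ ⊤) (hS1 : (1 : G) ∉ S)
    (hSinv : ∀ s ∈ S, s⁻¹ ∈ S) {k : ℕ} :
    IsRegularSet (cayley S) (H : Set G) 0 k ↔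
      MapsTo ((↑) : G → G ⧸ H) S {((1 : G) : G ⧸ H)}ᶜ ∧
        ∀ q ∈ ({((1 : G) : G ⧸ H)}ᶜ : Set (G ⧸ H)), {s ∈ S | (s : G ⧸ H) = q}.ncard = k := by
  have hmem : ∀ v : G, v ∈ (H : Set G) ↔ (v : G ⧸ H) = ((1 : G) : G ⧸ H) := fun v => by
    rw [SetLike.mem_coe, QuotientGroup.eq, mul_one, inv_mem_iff]
  have hfiber_one : {s ∈ S | (s : G ⧸ H) = ((1 : G) : G ⧸ H)}.ncard = 0 ↔
      MapsTo ((↑) : G → G ⧸ H) S {((1 : G) : G ⧸ H)}ᶜ := by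
    rw [ncard_eq_zero, eq_empty_iff_forall_notMem]
    simp [MapsTo]
  have hinside : (∀ v ∈ (H : Set G), {s ∈ S | (s : G ⧸ H) = v}.ncard = 0) ↔
      MapsTo ((↑) : G → G ⧸ H) S {((1 : G) : G ⧸ H)}ᶜ :=
    ⟨fun h => hfiber_one.mp (h 1 H.one_mem),
      fun h v hv => by rw [(hmem v).mp hv]; exact hfiber_one.mpr h⟩
  have houtside : (∀ v ∉ (H : Set G), {s ∈ S | (s : G ⧸ H) = v}.ncard = k) ↔
      ∀ q ∈ ({((1 : G) : G ⧸ H)}ᶜ : Set (G ⧸ H)), {s ∈ S | (s : G ⧸ H) = q}.ncard = k := by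
    simp only [mem_compl_singleton_iff, QuotientGroup.forall_mk, hmem]
  rw [IsRegularSet, and_iff_right ⟨1, H.one_mem⟩,
    and_iff_right (by simpa only [Ne, Subgroup.coe_eq_univ] using hH)]
  simp only [ncard_cayley_adj_mem_subgroup hS1 hSinv]
  exact and_congr hinside houtside

end Cayley

theorem stmt5_general {G : Type*} [Group G] [Fintype G] (H : Subgroup G) (hH : H ≠ ⊤)
    (S : Set G) (hS1 : (1 : G) ∉ S) (hSinv : ∀ s ∈ S, s⁻¹ ∈ S) (k : ℕ) :
    IsRegularSet (cayley S) (H : Set G) 0 k ↔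
      ∃ L : Fin k → Set G, (Pairwise fun i j => Disjoint (L i) (L j)) ∧
        (⋃ i, L i) = S ∧ ∀ i, IsLeftTransversal H (L i ∪ {1}) := by
  simp only [isLeftTransversal_iff]
  rw [isRegularSet_cayley_subgroup_iff hH hS1 hSinv,
    exists_partition_union_singleton_iff _ hS1, and_congr_right_iff]
  intro hS
  rw [exists_partition_iff_ncard_fiber _ hS, Nat.card_fin]

theorem stmt5 {G : Type*} [Group G] [Fintype G] (H : Subgroup G) (hH : H ≠ ⊤)
    (S : Set G) (hS1 : (1 : G) ∉ S) (hSinv : ∀ s ∈ S, s⁻¹ ∈ S) (k : ℕ) (hk : 1 ≤ k) :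
    IsRegularSet (cayley S) (H : Set G) 0 k ↔
      ∃ L : Fin k → Set G, (Pairwise fun i j => Disjoint (L i) (L j)) ∧
        (⋃ i, L i) = S ∧ ∀ i, IsLeftTransversal H (L i ∪ {1}) :=
  stmt5_general H hH S hS1 hSinv k
end

section
/- Let G be a finite group, H a proper subgroup, S ⊆ G∖{e} inverse-closed, and k ≥ 1. If S can be partitioned into k parts L₁,…,L_k with each Lᵢ ∪ {e} a left transversal of H in G, then S can also be partitioned into k parts R₁,…,R_k with each Rᵢ ∪ {e} a right transversal of H in G. -/
open Set

def IsRightTransversal {G : Type*} [Group G] (H : Subgroup G) (T : Set G) : Prop :=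
  ∀ g : G, ∃! t, t ∈ T ∧ g * t⁻¹ ∈ H

open scoped Pointwise

theorem IsLeftTransversal.inv {G : Type*} [Group G] {H : Subgroup G} {T : Set G}
    (hT : IsLeftTransversal H T) : IsRightTransversal H T⁻¹ := by
  intro g
  obtain ⟨t, ⟨ht, htH⟩, huniq⟩ := hT g⁻¹
  refine ⟨t⁻¹, ⟨by simpa using ht, by simpa using H.inv_mem htH⟩, fun y ⟨hy, hyH⟩ => ?_⟩
  exact inv_eq_iff_eq_inv.mp (huniq y⁻¹ ⟨hy, by simpa using H.inv_mem hyH⟩)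

theorem stmt6_general {G : Type*} [Group G] (H : Subgroup G)
    (S : Set G) (hSinv : ∀ s ∈ S, s⁻¹ ∈ S) (k : ℕ)
    (L : Fin k → Set G) (hdisj : Pairwise fun i j => Disjoint (L i) (L j))
    (hcover : (⋃ i, L i) = S) (htrans : ∀ i, IsLeftTransversal H (L i ∪ {1})) :
    ∃ R : Fin k → Set G, (Pairwise fun i j => Disjoint (R i) (R j)) ∧
      (⋃ i, R i) = S ∧ ∀ i, IsRightTransversal H (R i ∪ {1}) := by
  refine ⟨fun i => (L i)⁻¹, fun i j hij => (hdisj hij).preimage _, ?_, fun i => ?_⟩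
  · rw [← iUnion_inv, hcover, inv_eq_self_iff_inv_subset]
    exact fun s hs => by simpa using hSinv _ hs
  · simpa [union_inv] using (htrans i).inv

theorem stmt6 {G : Type*} [Group G] [Fintype G] (H : Subgroup G) (hH : H ≠ ⊤)
    (S : Set G) (hS1 : (1 : G) ∉ S) (hSinv : ∀ s ∈ S, s⁻¹ ∈ S) (k : ℕ) (hk : 1 ≤ k)
    (L : Fin k → Set G) (hdisj : Pairwise fun i j => Disjoint (L i) (L j))
    (hcover : (⋃ i, L i) = S) (htrans : ∀ i, IsLeftTransversal H (L i ∪ {1})) :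
    ∃ R : Fin k → Set G, (Pairwise fun i j => Disjoint (R i) (R j)) ∧
      (⋃ i, R i) = S ∧ ∀ i, IsRightTransversal H (R i ∪ {1}) :=
  stmt6_general H S hSinv k L hdisj hcover htrans
end

section
/- Let G be a finite group, H a proper subgroup, S ⊆ G∖{e} inverse-closed, and k ≥ 1. Then H is a (0,k)-regular set in Cay(G,S) if and only if H ∩ S = ∅ and S can be partitioned into |G:H| − 1 parts each of size k such that sH = s′H for s, s′ in the same part and sH ≠ s′H for s, s′ in different parts. -/
open Set Pointwise

/-! The neighbours of `v` inside `H` correspond, via `u ↦ v * u⁻¹`, to the elements of `S` in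
the left coset `v • H`. So `H` is `(0,k)`-regular exactly when `S` misses `H` and meets every
other left coset in `k` elements, i.e. when the fibres of `S → G ⧸ H` are `|G:H| - 1` blocks of
size `k`. -/

section FiberPartition

variable {α β ι : Type*} {f : α → β} {S : Set α} {T : ι → Set α}

lemma inter_preimage_singleton_eq_of_mem (hunion : ⋃ i, T i = S)
    (hsame : ∀ i, ∀ s ∈ T i, ∀ s' ∈ T i, f s = f s')
    (hdiff : ∀ i j, i ≠ j → ∀ s ∈ T i, ∀ s' ∈ T j, f s ≠ f s') {i : ι} {s : α} (hs : s ∈ T i) :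
    S ∩ f ⁻¹' {f s} = T i := by
  ext x
  constructor
  · rintro ⟨hxS, hx : f x = f s⟩
    obtain ⟨j, hxj⟩ := mem_iUnion.mp (hunion ▸ hxS)
    by_contra hxi
    exact hdiff j i (by rintro rfl; exact hxi hxj) x hxj s hs hx
  · intro hx
    exact ⟨hunion ▸ mem_iUnion_of_mem i hx, hsame i x hx s hs⟩

theorem exists_partition_into_fibers_iff [Finite ι] {B : Set β} (hB : B.Finite)
    (hι : Nat.card ι = B.ncard) (hSB : S ⊆ f ⁻¹' B) {k : ℕ} (hk : 1 ≤ k) :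
    (∃ T : ι → Set α,
      (Pairwise fun i j => Disjoint (T i) (T j)) ∧ (⋃ i, T i) = S ∧ (∀ i, (T i).ncard = k) ∧
      (∀ i, ∀ s ∈ T i, ∀ s' ∈ T i, f s = f s') ∧
      (∀ i j, i ≠ j → ∀ s ∈ T i, ∀ s' ∈ T j, f s ≠ f s')) ↔
    ∀ b ∈ B, (S ∩ f ⁻¹' {b}).ncard = k := by
  have : Finite B := hB
  constructor
  · rintro ⟨T, -, hunion, hcard, hsame, hdiff⟩
    -- The blocks are nonempty, so picking a point of each injects `ι` into `B`; count to finish.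
    choose w hw using fun i => nonempty_of_ncard_ne_zero (s := T i) (by rw [hcard]; omega)
    let c : ι → B := fun i => ⟨f (w i), hSB (hunion ▸ mem_iUnion_of_mem i (hw i))⟩
    have hc : c.Bijective := by
      refine Function.Injective.bijective_of_nat_card_le (fun i j hij => ?_)
        (by rw [hι, Nat.card_coe_set_eq])
      by_contra hne
      exact hdiff i j hne _ (hw i) _ (hw j) (congrArg Subtype.val hij)
    intro b hb
    obtain ⟨i, hi⟩ := hc.2 ⟨b, hb⟩
    rw [← show f (w i) = b from congrArg Subtype.val hi,
      inter_preimage_singleton_eq_of_mem hunion hsame hdiff (hw i), hcard]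
  · intro hcount
    obtain ⟨e⟩ : Nonempty (ι ≃ B) := Finite.card_eq.mp (by rwa [Nat.card_coe_set_eq])
    refine ⟨fun i => S ∩ f ⁻¹' {(e i : β)}, fun i j hij => ?_, ?_, fun i => hcount _ (e i).2,
      ?_, ?_⟩
    · have hfib := disjoint_singleton.mpr (Subtype.coe_injective.ne (e.injective.ne hij))
      exact (hfib.preimage f).mono inter_subset_right inter_subset_right
    · ext s
      simp only [mem_iUnion, mem_inter_iff, mem_preimage, mem_singleton_iff]
      exact ⟨fun ⟨_, hs, _⟩ => hs, fun hs => ⟨e.symm ⟨f s, hSB hs⟩, hs, by simp⟩⟩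
    · rintro i s ⟨-, hs⟩ s' ⟨-, hs'⟩
      exact hs.trans hs'.symm
    · rintro i j hij s ⟨-, hs⟩ s' ⟨-, hs'⟩ heq
      exact hij (e.injective (Subtype.coe_injective (hs.symm.trans (heq.trans hs'))))

end FiberPartition

section Coset

variable {G : Type*} [Group G] (H : Subgroup G)

lemma leftCoset_eq_preimage_mk (v : G) :
    v • (H : Set G) = QuotientGroup.mk ⁻¹' {(v : G ⧸ H)} := by
  ext g
  rw [mem_leftCoset_iff, mem_preimage, mem_singleton_iff, eq_comm, QuotientGroup.eq,
    SetLike.mem_coe]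

lemma leftCoset_eq_leftCoset_iff_mk_eq (s s' : G) :
    s • (H : Set G) = s' • (H : Set G) ↔ (s : G ⧸ H) = s' :=
  (leftCoset_eq_iff H).trans QuotientGroup.eq.symm

end Coset

section Cayley

variable {G : Type*} [Group G] {S : Set G}

lemma cayley_adj_iff (hS1 : (1 : G) ∉ S) (hSinv : ∀ s ∈ S, s⁻¹ ∈ S) {v u : G} :
    (cayley S).Adj v u ↔ v * u⁻¹ ∈ S := by
  refine ⟨fun h => h.2.2, fun h => ⟨?_, by simpa using hSinv _ h, h⟩⟩
  rintro rfl
  exact hS1 (by simpa using h)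

lemma ncard_cayley_adj_inter (hS1 : (1 : G) ∉ S) (hSinv : ∀ s ∈ S, s⁻¹ ∈ S) (D : Set G)
    (v : G) : {u | (cayley S).Adj v u ∧ u ∈ D}.ncard = (S ∩ v • D⁻¹).ncard := by
  have : {u | (cayley S).Adj v u ∧ u ∈ D} = (fun u => v * u⁻¹) ⁻¹' (S ∩ v • D⁻¹) := by
    ext u
    simp [cayley_adj_iff hS1 hSinv, mem_smul_set_iff_inv_smul_mem]
  rw [this, ncard_preimage_of_injective_subset_range]
  · exact fun a b h => inv_injective (mul_left_cancel h)
  · exact fun s _ => ⟨s⁻¹ * v, by group⟩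

lemma isRegularSet_cayley_subgroup_zero_iff [Finite G] (hS1 : (1 : G) ∉ S)
    (hSinv : ∀ s ∈ S, s⁻¹ ∈ S) {H : Subgroup G} (hH : H ≠ ⊤) {k : ℕ} :
    IsRegularSet (cayley S) (H : Set G) 0 k ↔
      (H : Set G) ∩ S = ∅ ∧ ∀ v ∉ H, (S ∩ v • (H : Set G)).ncard = k := by
  have hne : (H : Set G).Nonempty := ⟨1, H.one_mem⟩
  have hH' : (H : Set G) ≠ univ := by rwa [Ne, Subgroup.coe_eq_univ]
  have hinside : (∀ v ∈ H, (S ∩ v • (H : Set G)).ncard = 0) ↔ (H : Set G) ∩ S = ∅ := by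
    rw [inter_comm, ← ncard_eq_zero]
    exact ⟨fun h => by simpa using h 1 H.one_mem, fun h v hv => by rwa [smul_coe_set hv]⟩
  simp only [IsRegularSet, ncard_cayley_adj_inter hS1 hSinv, inv_coe_set]
  simp only [SetLike.mem_coe, hinside, hne, hH', Ne, not_false_eq_true, true_and]

end Cayley

theorem stmt7 {G : Type*} [Group G] [Fintype G] (H : Subgroup G) (hH : H ≠ ⊤)
    (S : Set G) (hS1 : (1 : G) ∉ S) (hSinv : ∀ s ∈ S, s⁻¹ ∈ S) (k : ℕ) (hk : 1 ≤ k) :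
    IsRegularSet (cayley S) (H : Set G) 0 k ↔
      ((H : Set G) ∩ S = ∅ ∧
        ∃ T : Fin (H.index - 1) → Set G,
          (Pairwise fun i j => Disjoint (T i) (T j)) ∧ (⋃ i, T i) = S ∧
          (∀ i, (T i).ncard = k) ∧
          (∀ i, ∀ s ∈ T i, ∀ s' ∈ T i, s • (H : Set G) = s' • (H : Set G)) ∧
          (∀ i j, i ≠ j → ∀ s ∈ T i, ∀ s' ∈ T j, s • (H : Set G) ≠ s' • (H : Set G))) := by
  set B : Set (G ⧸ H) := {((1 : G) : G ⧸ H)}ᶜ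
  have hmem_B (v : G) : (v : G ⧸ H) ∈ B ↔ v ∉ H := by
    simp [B, QuotientGroup.eq]
  have hB : Nat.card (Fin (H.index - 1)) = B.ncard := by
    rw [Nat.card_fin, ncard_compl, ncard_singleton, Subgroup.index]
  rw [isRegularSet_cayley_subgroup_zero_iff hS1 hSinv hH]
  refine and_congr_right fun hHS => ?_
  have hSB : S ⊆ QuotientGroup.mk ⁻¹' B := fun s hs =>
    (hmem_B s).2 fun hsH => notMem_empty s (hHS.subset ⟨hsH, hs⟩)
  calc (∀ v ∉ H, (S ∩ v • (H : Set G)).ncard = k)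
      ↔ ∀ b ∈ B, (S ∩ QuotientGroup.mk ⁻¹' {b}).ncard = k := by
        simp only [QuotientGroup.mk_surjective.forall, hmem_B, leftCoset_eq_preimage_mk]
    _ ↔ _ := (exists_partition_into_fibers_iff B.toFinite hB hSB hk).symm
    _ ↔ _ := by simp only [ne_eq, leftCoset_eq_leftCoset_iff_mk_eq]
end

section
/- Let G be a finite group and H a non-trivial proper normal subgroup of G. Then for every even integer k with 2 ≤ k ≤ |H|, there exists an inverse-closed subset S of G∖{e} such that H is a (0,k)-regular set in Cay(G,S). -/
open Set

/-- `D` is a `(0,k)`-regular set of the group `G`: it is a `(0,k)`-regular set in some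
Cayley graph of `G` (with inverse-closed connection set avoiding the identity). -/
def IsRegularSetOfGroup (G : Type*) [Group G] (D : Set G) (k : ℕ) : Prop :=
  ∃ S : Set G, (1 : G) ∉ S ∧ (∀ s ∈ S, s⁻¹ ∈ S) ∧ IsRegularSet (cayley S) D 0 k

/-!
`H` is a `(0,k)`-regular set of `Cay(G,S)` as soon as `S` avoids `H` and meets every coset
`q ≠ H` in exactly `k` elements: the neighbours of `v ∉ H` inside `H` are the `s v` with
`s ∈ S ∩ H v⁻¹`. Since `S` must be inverse-closed, its trace on `q` determines its trace on `q⁻¹`.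
When `q ≠ q⁻¹` take any `k` elements of `q` together with their inverses in `q⁻¹`; when `q = q⁻¹`
the coset is inverse-closed and splits into inverse pairs and involutions, so, `k` being even,
it contains an inverse-closed subset of size `k`.
-/

open Pointwise

namespace Set

variable {α : Type*} [InvolutiveInv α]

theorem exists_subset_inv_eq_ncard_eq_two_mul {T : Set α} (hT : T⁻¹ = T) {m : ℕ}
    (hm : 2 * m ≤ T.ncard) : ∃ B ⊆ T, B⁻¹ = B ∧ B.ncard = 2 * m := by
  induction m generalizing T with
  | zero => exact ⟨∅, empty_subset T, inv_empty, ncard_empty α⟩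
  | succ m ih =>
    have hTfin : T.Finite := finite_of_ncard_pos (by omega)
    by_cases hpair : ∃ x ∈ T, x⁻¹ ≠ x
    · obtain ⟨x, hxT, hx⟩ := hpair
      have hxT' : x⁻¹ ∈ T := hT ▸ inv_mem_inv.mpr hxT
      set T' := T \ {x, x⁻¹}
      have hT' : T'⁻¹ = T' := by
        rw [← inv_preimage, preimage_sdiff, inv_preimage, inv_preimage, hT, inv_insert,
          inv_singleton, inv_inv, pair_comm]
      have hcard : T'.ncard = T.ncard - 2 := by
        rw [ncard_sdiff (pair_subset hxT hxT'), ncard_pair hx.symm]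
      obtain ⟨B, hBT', hB, hBcard⟩ := ih hT' (by omega)
      have hBfin : B.Finite := hTfin.subset (hBT'.trans sdiff_subset)
      have hxB : x ∉ insert x⁻¹ B := by
        rintro (h | h)
        · exact hx h.symm
        · exact (hBT' h).2 (mem_insert x _)
      have hx'B : x⁻¹ ∉ B := fun h => (hBT' h).2 (mem_insert_of_mem x rfl)
      refine ⟨insert x (insert x⁻¹ B), ?_, ?_, ?_⟩
      · exact insert_subset hxT (insert_subset hxT' (hBT'.trans sdiff_subset))
      · rw [inv_insert, inv_insert, hB, inv_inv, insert_comm]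
      · rw [ncard_insert_of_notMem hxB (hBfin.insert _), ncard_insert_of_notMem hx'B hBfin,
          hBcard]
        ring
    · push Not at hpair
      obtain ⟨B, hBT, hBcard⟩ := exists_subset_card_eq hm
      refine ⟨B, hBT, ?_, hBcard⟩
      rw [← image_inv_eq_inv, image_congr fun y hy => hpair y (hBT hy), image_id']

end Set

theorem exists_inv_equivariant_subsets_ncard_eq {ι α : Type*} [InvolutiveInv ι]
    [InvolutiveInv α] (f : ι → Set α) (hf : ∀ i, (f i)⁻¹ = f i⁻¹) {k : ℕ} (hk : Even k)
    (hkf : ∀ i, k ≤ (f i).ncard) :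
    ∃ F : ι → Set α, (∀ i, F i ⊆ f i ∧ (F i).ncard = k) ∧ ∀ i, F i⁻¹ = (F i)⁻¹ := by
  classical
  -- an arbitrary order selects one index from each pair `{i, i⁻¹}` with `i ≠ i⁻¹`
  let _ : LinearOrder ι := IsWellOrder.linearOrder WellOrderingRel
  obtain ⟨m, rfl⟩ := hk.two_dvd
  choose C hCf hCcard using fun i => exists_subset_card_eq (hkf i)
  choose B hBf hB hBcard using fun i (hi : i⁻¹ = i) =>
    exists_subset_inv_eq_ncard_eq_two_mul (T := f i) (by rw [hf, hi]) (hkf i)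
  let F i := if hi : i⁻¹ = i then B i hi else if i < i⁻¹ then C i else (C i⁻¹)⁻¹
  refine ⟨F, fun i => ?_, fun i => ?_⟩
  · by_cases hi : i⁻¹ = i
    · simpa [F, hi] using ⟨hBf i hi, hBcard i hi⟩
    by_cases hlt : i < i⁻¹
    · simpa [F, hi, hlt] using ⟨hCf i, hCcard i⟩
    · simp only [F, hi, hlt, dite_false, if_false]
      refine ⟨?_, by rw [ncard_inv, hCcard]⟩
      rw [← inv_subset_inv, inv_inv, hf]
      exact hCf i⁻¹
  · by_cases hi : i⁻¹ = i
    · rw [hi]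
      simp [F, hi, hB]
    rcases lt_or_gt_of_ne hi with hlt | hlt <;> simp [F, hi, Ne.symm hi, hlt, not_lt_of_gt hlt]

namespace QuotientGroup

variable {G : Type*} [Group G]

theorem inv_preimage_mk_singleton (H : Subgroup G) [H.Normal] (q : G ⧸ H) :
    ((mk ⁻¹' {q} : Set G))⁻¹ = mk ⁻¹' {q⁻¹} := by
  ext x
  simp [inv_eq_iff_eq_inv]

theorem ncard_preimage_mk_singleton (H : Subgroup G) (q : G ⧸ H) :
    (mk ⁻¹' {q} : Set G).ncard = Nat.card H := by
  obtain ⟨g, rfl⟩ := mk_surjective q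
  have : (mk ⁻¹' {(g : G ⧸ H)} : Set G) = (g * ·) '' H := by
    ext x
    simp [eq_comm (a := (x : G ⧸ H)), QuotientGroup.eq]
  rw [this, ncard_image_of_injective _ (mul_right_injective g), ← Nat.card_coe_set_eq,
    SetLike.coe_sort_coe]

end QuotientGroup

section Cayley

variable {G : Type*} [Group G] {S : Set G}

theorem cayley_adj_iff_s10 (hS : S⁻¹ = S) (h1 : 1 ∉ S) {x y : G} :
    (cayley S).Adj x y ↔ y * x⁻¹ ∈ S := by
  refine ⟨fun h => h.2.1, fun h => ⟨?_, h, ?_⟩⟩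
  · rintro rfl
    exact h1 (by simpa using h)
  · rw [← hS, mem_inv, mul_inv_rev, inv_inv]
    exact h

theorem isRegularSetOfGroup_of_ncard_inter_coset {H : Subgroup G} [H.Normal] (htop : H ≠ ⊤)
    (hS : S⁻¹ = S) (hSH : Disjoint S H) {k : ℕ}
    (hSk : ∀ q : G ⧸ H, q ≠ 1 → (S ∩ QuotientGroup.mk ⁻¹' {q}).ncard = k) :
    IsRegularSetOfGroup G H k := by
  have h1 : (1 : G) ∉ S := fun h => disjoint_left.mp hSH h H.one_mem
  refine ⟨S, h1, fun s hs => hS ▸ inv_mem_inv.mpr hs, ⟨1, H.one_mem⟩,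
    fun h => htop (Subgroup.coe_eq_univ.mp h), fun v hv => ?_, fun v hv => ?_⟩
  · convert ncard_empty G
    refine eq_empty_of_forall_notMem fun u ⟨hvu, hu⟩ => ?_
    exact disjoint_left.mp hSH ((cayley_adj_iff_s10 hS h1).mp hvu) (H.mul_mem hu (H.inv_mem hv))
  · have : {u | (cayley S).Adj v u ∧ u ∈ (H : Set G)} =
        (· * v⁻¹) ⁻¹' (S ∩ QuotientGroup.mk ⁻¹' {(v⁻¹ : G ⧸ H)}) := by
      ext u
      simp [cayley_adj_iff_s10 hS h1, QuotientGroup.eq_one_iff]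
    rw [this, ← image_mul_right, ncard_image_of_injective _ (mul_left_injective v)]
    exact hSk _ (by simpa [QuotientGroup.eq_one_iff] using hv)

end Cayley

theorem stmt10_general {G : Type*} [Group G] (H : Subgroup G) [H.Normal]
    (htop : H ≠ ⊤) (k : ℕ) (hkH : k ≤ Nat.card H)
    (hke : Even k) :
    IsRegularSetOfGroup G (H : Set G) k := by
  obtain ⟨F, hF, hFinv⟩ := exists_inv_equivariant_subsets_ncard_eq
    (fun q : G ⧸ H => QuotientGroup.mk ⁻¹' {q}) (QuotientGroup.inv_preimage_mk_singleton H) hke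
    (fun q => (QuotientGroup.ncard_preimage_mk_singleton H q).symm ▸ hkH)
  let S : Set G := {x | (x : G ⧸ H) ≠ 1 ∧ x ∈ F x}
  have hS : S⁻¹ = S := by
    ext x
    simp [S, hFinv]
  have hSH : Disjoint S H :=
    disjoint_left.mpr fun x hx hxH => hx.1 ((QuotientGroup.eq_one_iff x).mpr hxH)
  refine isRegularSetOfGroup_of_ncard_inter_coset htop hS hSH fun q hq => ?_
  have : S ∩ QuotientGroup.mk ⁻¹' {q} = F q := by
    ext x
    constructor
    · rintro ⟨hx, rfl⟩
      exact hx.2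
    · intro hx
      obtain rfl : (x : G ⧸ H) = q := (hF q).1 hx
      exact ⟨⟨hq, hx⟩, rfl⟩
  rw [this, (hF q).2]

theorem stmt10 {G : Type*} [Group G] [Fintype G] (H : Subgroup G) [H.Normal]
    (hbot : H ≠ ⊥) (htop : H ≠ ⊤) (k : ℕ) (hk2 : 2 ≤ k) (hkH : k ≤ Nat.card H)
    (hke : Even k) :
    IsRegularSetOfGroup G (H : Set G) k :=
  stmt10_general H htop k hkH hke
end

section
/- Let D₂ₙ = ⟨a, b | aⁿ = b² = e, bab = a⁻¹⟩ be the dihedral group of order 2n ≥ 6, and let H = ⟨a^t, a^s b⟩ with t dividing n and 0 ≤ s ≤ n−1 be a proper subgroup of D₂ₙ. Then for every integer k with 1 ≤ k ≤ |H|, H is a (0,k)-regular set of D₂ₙ. -/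
open Set

/-!
The rotations form a subgroup `N` of index two, and every reflection is an involution. As `H`
contains a reflection `β`, left multiplication by `β` swaps the rotations and the reflections of
each right coset `Hg`, so every such coset contains `q = |H| / 2` of each. A connection set `S`
disjoint from `H` makes `H` a `(0,k)`-regular set once it meets every right coset `Hg ≠ H` in
exactly `k` elements. For `k ≤ q` take `k` reflections from each such coset; for `k > q` take all
rotations outside `H` together with `k - q` reflections from each coset. Reflections are
self-inverse and the rotations outside `H` form an inverse-closed set, so `S` is inverse-closed.
-/

open Pointwise MulOpposite

namespace Set

variable {α : Type*}

noncomputable def subsetOfNCard (j : ℕ) (X : Set α) : Set α :=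
  if h : j ≤ X.ncard then (X.exists_subset_card_eq h).choose else ∅

lemma subsetOfNCard_subset (j : ℕ) (X : Set α) : X.subsetOfNCard j ⊆ X := by
  unfold subsetOfNCard
  split_ifs with h
  · exact (X.exists_subset_card_eq h).choose_spec.1
  · exact empty_subset X

lemma ncard_subsetOfNCard {j : ℕ} {X : Set α} (h : j ≤ X.ncard) :
    (X.subsetOfNCard j).ncard = j := by
  rw [subsetOfNCard, dif_pos h]
  exact (X.exists_subset_card_eq h).choose_spec.2

end Set

namespace Subgroup

variable {G : Type*} [Group G] {N H : Subgroup G}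

lemma notMem_of_mem_rightCoset {g x : G} (hg : g ∉ H) (hx : x ∈ op g • (H : Set G)) :
    x ∉ H := fun hxH => hg <| by
  simpa using H.mul_mem (H.inv_mem ((mem_rightCoset_iff g).mp hx)) hxH

theorem isRegularSetOfGroup_of_ncard_inter_rightCoset (hH : H ≠ ⊤) {S : Set G} {k : ℕ}
    (hSH : Disjoint S H) (hSinv : ∀ s ∈ S, s⁻¹ ∈ S)
    (hS : ∀ g ∉ H, (S ∩ op g • (H : Set G)).ncard = k) :
    IsRegularSetOfGroup G H k := by
  refine ⟨S, fun h1 => hSH.notMem_of_mem_left h1 H.one_mem, hSinv, ⟨1, H.one_mem⟩,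
    fun h => hH (coe_eq_univ.mp h), fun v hv => ?_, fun v hv => ?_⟩
  · convert ncard_empty G
    refine eq_empty_iff_forall_notMem.mpr ?_
    rintro u ⟨⟨-, huv, -⟩, hu⟩
    exact hSH.notMem_of_mem_left huv (H.mul_mem hu (H.inv_mem hv))
  · have hneighbours : {u | (cayley S).Adj v u ∧ u ∈ (H : Set G)}
        = (· * v) '' (S ∩ op v⁻¹ • (H : Set G)) := by
      ext u
      simp only [mem_ofPred_eq, mem_image, mem_inter_iff, mem_rightCoset_iff, inv_inv,
        SetLike.mem_coe]
      constructor
      · rintro ⟨⟨-, huv, -⟩, hu⟩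
        exact ⟨u * v⁻¹, ⟨huv, by simpa using hu⟩, by simp⟩
      · rintro ⟨y, ⟨hy, hyv⟩, rfl⟩
        refine ⟨⟨fun h => hv (h ▸ hyv), by simpa using hy, ?_⟩, hyv⟩
        simpa using hSinv y hy
    rw [hneighbours, ncard_image_of_injective _ (mul_left_injective v)]
    exact hS v⁻¹ (inv_mem_iff.not.mpr hv)

lemma ncard_rightCoset_inter_eq_ncard_rightCoset_sdiff (hN : N.index = 2) {β : G} (hβH : β ∈ H)
    (hβN : β ∉ N) (g : G) :
    (op g • (H : Set G) ∩ N).ncard = (op g • (H : Set G) \ N).ncard := by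
  have hswap : (β * ·) '' (op g • (H : Set G) ∩ N) = op g • (H : Set G) \ N := by
    ext z
    simp only [mem_image, mem_inter_iff, mem_sdiff, mem_rightCoset_iff, SetLike.mem_coe]
    constructor
    · rintro ⟨y, ⟨hy, hyN⟩, rfl⟩
      exact ⟨by simpa [mul_assoc] using H.mul_mem hβH hy,
        by simp [mul_mem_iff_of_index_two hN, hβN, hyN]⟩
    · rintro ⟨hz, hzN⟩
      exact ⟨β⁻¹ * z, ⟨by simpa [mul_assoc] using H.mul_mem (H.inv_mem hβH) hz,
        by simp [mul_mem_iff_of_index_two hN, hβN, hzN]⟩, mul_inv_cancel_left β z⟩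
  rw [← hswap, ncard_image_of_injective _ (mul_right_injective β)]

lemma two_mul_ncard_rightCoset_sdiff [Finite G] (hN : N.index = 2) {β : G} (hβH : β ∈ H)
    (hβN : β ∉ N) (g : G) :
    2 * (op g • (H : Set G) \ N).ncard = Nat.card H := by
  have hsplit := ncard_inter_add_ncard_sdiff_eq_ncard (op g • (H : Set G)) N
  rw [ncard_rightCoset_inter_eq_ncard_rightCoset_sdiff hN hβH hβN, ncard_smul_set] at hsplit
  rw [two_mul, hsplit, ← Nat.card_coe_set_eq]
  rfl

/-- Membership is decided through the coset `op x • H`, which depends only on the coset of `x`,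
so the same `j` elements are chosen for all elements of a coset. -/
noncomputable def rightCosetSdiffChoice (H N : Subgroup G) (j : ℕ) : Set G :=
  {x | x ∉ H ∧ x ∈ (op x • (H : Set G) \ N).subsetOfNCard j}

lemma rightCosetSdiffChoice_inter_rightCoset {g : G} (hg : g ∉ H) (j : ℕ) :
    rightCosetSdiffChoice H N j ∩ op g • (H : Set G) =
      (op g • (H : Set G) \ N).subsetOfNCard j := by
  have hcoset : ∀ x ∈ op g • (H : Set G), op x • (H : Set G) = op g • (H : Set G) :=
    fun x hx => (rightCoset_eq_iff H).mpr (by simpa using H.inv_mem ((mem_rightCoset_iff g).mp hx))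
  ext x
  constructor
  · rintro ⟨⟨-, hx⟩, hxg⟩
    rwa [hcoset x hxg] at hx
  · intro hx
    have hxg : x ∈ op g • (H : Set G) := (subsetOfNCard_subset _ _ hx).1
    exact ⟨⟨notMem_of_mem_rightCoset hg hxg, by rwa [hcoset x hxg]⟩, hxg⟩

lemma disjoint_rightCosetSdiffChoice (j : ℕ) : Disjoint (rightCosetSdiffChoice H N j) H :=
  disjoint_left.mpr fun _ hx => hx.1

lemma inv_mem_rightCosetSdiffChoice (hinv : ∀ x ∉ N, x⁻¹ = x) {j : ℕ} {x : G}
    (hx : x ∈ rightCosetSdiffChoice H N j) : x⁻¹ ∈ rightCosetSdiffChoice H N j := by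
  rwa [hinv x (subsetOfNCard_subset _ _ hx.2).2]

theorem isRegularSetOfGroup_of_index_two [Finite G] (hN : N.index = 2)
    (hinv : ∀ x ∉ N, x⁻¹ = x) (hHN : ¬H ≤ N) (hH : H ≠ ⊤) {k : ℕ}
    (hk : k ≤ Nat.card H) :
    IsRegularSetOfGroup G H k := by
  obtain ⟨β, hβH, hβN⟩ := SetLike.not_le_iff_exists.mp hHN
  set q := Nat.card H / 2
  have hsdiff : ∀ g, (op g • (H : Set G) \ N).ncard = q := fun g => by
    have := two_mul_ncard_rightCoset_sdiff hN hβH hβN g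
    omega
  have hq : 2 * q = Nat.card H := hsdiff 1 ▸ two_mul_ncard_rightCoset_sdiff hN hβH hβN 1
  by_cases hkq : k ≤ q
  · refine isRegularSetOfGroup_of_ncard_inter_rightCoset hH (disjoint_rightCosetSdiffChoice k)
      (fun _ => inv_mem_rightCosetSdiffChoice hinv) fun g hg => ?_
    rw [rightCosetSdiffChoice_inter_rightCoset hg, ncard_subsetOfNCard (hsdiff g ▸ hkq)]
  refine isRegularSetOfGroup_of_ncard_inter_rightCoset
    (S := rightCosetSdiffChoice H N (k - q) ∪ N \ H) hH
    (disjoint_union_left.mpr ⟨disjoint_rightCosetSdiffChoice _, disjoint_sdiff_left⟩) ?_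
    fun g hg => ?_
  · rintro x (hx | ⟨hxN, hxH⟩)
    · exact Or.inl (inv_mem_rightCosetSdiffChoice hinv hx)
    · exact Or.inr ⟨N.inv_mem hxN, fun h => hxH (by simpa using H.inv_mem h)⟩
  · have hrotations : (N \ H : Set G) ∩ op g • (H : Set G) = op g • (H : Set G) ∩ N := by
      ext x
      simp only [mem_inter_iff, mem_sdiff]
      exact ⟨fun ⟨⟨hxN, _⟩, hxg⟩ => ⟨hxg, hxN⟩,
        fun ⟨hxg, hxN⟩ => ⟨⟨hxN, notMem_of_mem_rightCoset hg hxg⟩, hxg⟩⟩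
    rw [union_inter_distrib_right, rightCosetSdiffChoice_inter_rightCoset hg, hrotations,
      ncard_union_eq (disjoint_sdiff_inter.mono_left (subsetOfNCard_subset _ _)),
      ncard_subsetOfNCard (by rw [hsdiff]; omega),
      ncard_rightCoset_inter_eq_ncard_rightCoset_sdiff hN hβH hβN, hsdiff]
    omega

end Subgroup

namespace DihedralGroup

variable {n : ℕ}

def rotations (n : ℕ) : Subgroup (DihedralGroup n) where
  carrier := range r
  mul_mem' := by
    rintro _ _ ⟨i, rfl⟩ ⟨j, rfl⟩
    exact ⟨i + j, (r_mul_r i j).symm⟩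
  one_mem' := ⟨0, r_zero⟩
  inv_mem' := by
    rintro _ ⟨i, rfl⟩
    exact ⟨-i, (inv_r i).symm⟩

@[simp]
lemma r_mem_rotations (i : ZMod n) : r i ∈ rotations n := ⟨i, rfl⟩

@[simp]
lemma sr_notMem_rotations (i : ZMod n) : sr i ∉ rotations n := by
  rintro ⟨j, h⟩
  cases h

lemma index_rotations : (rotations n).index = 2 :=
  Subgroup.index_eq_two_iff.mpr ⟨sr 0, by rintro (i | i) <;> simp [r_mul_sr, sr_mul_sr]⟩

lemma inv_eq_self_of_notMem_rotations : ∀ x ∉ rotations n, x⁻¹ = x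
  | r i, h => absurd (r_mem_rotations i) h
  | sr i, _ => inv_sr i

end DihedralGroup

theorem stmt15_general (n : ℕ) (hn : 3 ≤ n) (t s : ℕ)
    (H : Subgroup (DihedralGroup n))
    (hH : H = Subgroup.closure
      {DihedralGroup.r (t : ZMod n),
       DihedralGroup.r (s : ZMod n) * DihedralGroup.sr 0})
    (hprop : H ≠ ⊤) (k : ℕ) (hk2 : k ≤ Nat.card H) :
    IsRegularSetOfGroup (DihedralGroup n) (H : Set (DihedralGroup n)) k := by
  have : NeZero n := ⟨by omega⟩
  have hreflection : DihedralGroup.r (s : ZMod n) * DihedralGroup.sr 0 ∈ H :=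
    hH ▸ Subgroup.subset_closure (by simp)
  refine Subgroup.isRegularSetOfGroup_of_index_two DihedralGroup.index_rotations
    DihedralGroup.inv_eq_self_of_notMem_rotations (fun hle => ?_) hprop hk2
  simpa [DihedralGroup.r_mul_sr] using hle hreflection

theorem stmt15 (n : ℕ) (hn : 3 ≤ n) (t s : ℕ) (ht : t ∣ n) (hs : s ≤ n - 1)
    (H : Subgroup (DihedralGroup n))
    (hH : H = Subgroup.closure
      {DihedralGroup.r (t : ZMod n),
       DihedralGroup.r (s : ZMod n) * DihedralGroup.sr 0})
    (hprop : H ≠ ⊤) (k : ℕ) (hk1 : 1 ≤ k) (hk2 : k ≤ Nat.card H) :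
    IsRegularSetOfGroup (DihedralGroup n) (H : Set (DihedralGroup n)) k :=
  stmt15_general n hn t s H hH hprop k hk2
end

section
/- Let p be an odd prime, 1 ≤ t ≤ n−1 and k ≥ 1 with 2n = (p^t − 1)k. Let M be a t×n matrix over F_p of rank t whose multiset of columns consists of k copies each of a set N of (p^t−1)/2 nonzero vectors of F_p^t with the property that for every nonzero u ∈ F_p^t exactly one of u, −u lies in N. Then the null space W = {w ∈ F_p^n : Mw = 0} is a (0,k)-regular set in C_p^{□n}. -/
open Set

/-- The Cayley graph of an additive group with connection set `S`. -/
def cayleyAdd {A : Type*} [AddGroup A] (S : Set A) : SimpleGraph A where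
  Adj x y := x ≠ y ∧ y - x ∈ S ∧ x - y ∈ S
  symm := ⟨fun x y h => ⟨h.1.symm, h.2.2, h.2.1⟩⟩
  loopless := ⟨fun x h => h.1 rfl⟩

/-- The hypercube `Q_n`: the Cayley graph of `ℤ₂ⁿ` with respect to the standard basis. -/
def hypercube (n : ℕ) : SimpleGraph (Fin n → ZMod 2) :=
  cayleyAdd {v | ∃ i, v = Pi.single i 1}

/-- The Cartesian product of `n` copies of the cycle of length `p`: the Cayley graph of
`ℤ_pⁿ` with connection set `{±eᵢ : 1 ≤ i ≤ n}`. -/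
def torus (p n : ℕ) : SimpleGraph (Fin n → ZMod p) :=
  cayleyAdd {v | ∃ i, v = Pi.single i 1 ∨ v = -Pi.single i 1}

/-! The neighbours of `v` in the torus are the vectors `v ± eⱼ`, and `M (v ± eⱼ) = M v ± Mⱼ`, so
the neighbours of `v` lying in `W` correspond to the columns `Mⱼ = ∓ M v`. For `v ∈ W` there are
none, because no column vanishes. For `v ∉ W` exactly one of `± M v` lies in `N`: it occurs as a
column exactly `k` times, and its negative never does. -/

lemma cayleyAdd_adj_iff {A : Type*} [AddGroup A] {S : Set A} (hS : ∀ s ∈ S, -s ∈ S)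
    {x y : A} : (cayleyAdd S).Adj x y ↔ x ≠ y ∧ y - x ∈ S :=
  ⟨fun h => ⟨h.1, h.2.1⟩, fun h => ⟨h.1, h.2, by simpa using hS _ h.2⟩⟩

section KernelNeighbours

variable {A B F : Type*} [AddCommGroup A] [AddGroup B] [FunLike F A B] [AddMonoidHomClass F A B]
  {S : Set A}

lemma setOf_adj_and_map_eq_zero (hS : ∀ s ∈ S, -s ∈ S) (f : F) (v : A) :
    {u | (cayleyAdd S).Adj v u ∧ f u = 0} = (v + ·) '' {s ∈ S | s ≠ 0 ∧ f s = -f v} := by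
  ext u
  simp only [cayleyAdd_adj_iff hS, Set.mem_ofPred_eq, Set.mem_image]
  constructor
  · rintro ⟨⟨hvu, huv⟩, hu⟩
    refine ⟨u - v, ⟨huv, sub_ne_zero.2 hvu.symm, ?_⟩, add_sub_cancel v u⟩
    rw [map_sub, hu, zero_sub]
  · rintro ⟨s, ⟨hs, hs0, hfs⟩, rfl⟩
    refine ⟨⟨by simpa using hs0, by simpa using hs⟩, ?_⟩
    rw [map_add, hfs, add_neg_cancel]

lemma ncard_adj_and_map_eq_zero (hS : ∀ s ∈ S, -s ∈ S) (f : F) (v : A) :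
    {u | (cayleyAdd S).Adj v u ∧ f u = 0}.ncard = {s ∈ S | s ≠ 0 ∧ f s = -f v}.ncard := by
  rw [setOf_adj_and_map_eq_zero hS, Set.ncard_image_of_injective _ (add_right_injective v)]

lemma ncard_setOf_map_eq_neg (hS : ∀ s ∈ S, -s ∈ S) (f : F) (c : B) :
    {s ∈ S | s ≠ 0 ∧ f s = -c}.ncard = {s ∈ S | s ≠ 0 ∧ f s = c}.ncard := by
  rw [← Set.ncard_neg {s ∈ S | s ≠ 0 ∧ f s = c}]
  congr 1
  ext s
  simp only [Set.mem_ofPred_eq, Set.mem_neg, map_neg, neg_ne_zero, neg_eq_iff_eq_neg]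
  exact ⟨fun h => ⟨hS s h.1, h.2⟩, fun h => ⟨by simpa using hS _ h.1, h.2⟩⟩

end KernelNeighbours

section SignedBasis

def signedBasis (ι R : Type*) [DecidableEq ι] [Ring R] : Set (ι → R) :=
  {v | ∃ i, v = Pi.single i 1 ∨ v = -Pi.single i 1}

variable {ι R B F : Type*} [DecidableEq ι] [Ring R] [AddCommGroup B] [FunLike F (ι → R) B]
  [AddMonoidHomClass F (ι → R) B]

lemma neg_mem_signedBasis {s : ι → R} (hs : s ∈ signedBasis ι R) : -s ∈ signedBasis ι R := by
  obtain ⟨i, rfl | rfl⟩ := hs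
  exacts [⟨i, Or.inr rfl⟩, ⟨i, Or.inl (neg_neg _)⟩]

lemma map_ne_zero_of_mem_signedBasis {f : F} (hf : ∀ i, f (Pi.single i 1) ≠ 0) {s : ι → R}
    (hs : s ∈ signedBasis ι R) : f s ≠ 0 := by
  obtain ⟨i, rfl | rfl⟩ := hs
  exacts [hf i, by simpa using hf i]

lemma setOf_mem_signedBasis_map_eq [Nontrivial R] {f : F} {N : Set B}
    (hf : ∀ i, f (Pi.single i 1) ∈ N) {c : B} (hc : -c ∉ N) :
    {s ∈ signedBasis ι R | s ≠ 0 ∧ f s = c} = (Pi.single · 1) '' {i | f (Pi.single i 1) = c} := by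
  ext s
  simp only [Set.mem_ofPred_eq, Set.mem_image]
  constructor
  · rintro ⟨⟨i, rfl | rfl⟩, -, hs⟩
    · exact ⟨i, hs, rfl⟩
    · rw [map_neg] at hs
      exact (hc (neg_eq_iff_eq_neg.1 hs ▸ hf i)).elim
  · rintro ⟨i, hi, rfl⟩
    exact ⟨⟨i, Or.inl rfl⟩, by simp, hi⟩

lemma ncard_setOf_mem_signedBasis_map_eq [Nontrivial R] {f : F} {N : Set B}
    (hf : ∀ i, f (Pi.single i 1) ∈ N) {c : B} (hc : -c ∉ N) :
    {s ∈ signedBasis ι R | s ≠ 0 ∧ f s = c}.ncard = {i | f (Pi.single i 1) = c}.ncard := by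
  rw [setOf_mem_signedBasis_map_eq hf hc,
    Set.ncard_image_of_injective _ fun a b h => by
      simpa [Pi.single_apply, eq_comm] using congrFun h b]

end SignedBasis

theorem stmt19_general (p n t k : ℕ) (hp : p.Prime)
    (ht1 : 1 ≤ t) (ht2 : t ≤ n - 1)
    (M : Matrix (Fin t) (Fin n) (ZMod p))
    (N : Set (Fin t → ZMod p)) (hN0 : (0 : Fin t → ZMod p) ∉ N)
    (hNhalf : ∀ u : Fin t → ZMod p, u ≠ 0 → (u ∈ N ↔ -u ∉ N))
    (hcols : ∀ j : Fin n, (fun i => M i j) ∈ N)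
    (hmult : ∀ u ∈ N, {j : Fin n | (fun i => M i j) = u}.ncard = k) :
    IsRegularSet (torus p n) {w : Fin n → ZMod p | M.mulVec w = 0} 0 k := by
  have : Fact p.Prime := ⟨hp⟩
  have hcol (j : Fin n) : M.mulVecLin (Pi.single j 1) = fun i => M i j :=
    M.mulVec_single_one j
  have hcol0 (j : Fin n) : M.mulVecLin (Pi.single j 1) ≠ 0 := fun h => hN0 (h ▸ hcol j ▸ hcols j)
  have hcolN (j : Fin n) : M.mulVecLin (Pi.single j 1) ∈ N := hcol j ▸ hcols j
  have hneighbours (v : Fin n → ZMod p) :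
      {u | (torus p n).Adj v u ∧ u ∈ {w | M.mulVec w = 0}}.ncard =
        {s ∈ signedBasis (Fin n) (ZMod p) | s ≠ 0 ∧ M.mulVecLin s = -M.mulVec v}.ncard :=
    ncard_adj_and_map_eq_zero (fun _ => neg_mem_signedBasis) M.mulVecLin v
  refine ⟨⟨0, M.mulVec_zero⟩, fun hD => hcol0 ⟨0, by omega⟩ (hD ▸ mem_univ _), fun v hv => ?_,
    fun v hv => ?_⟩
  · rw [hneighbours, show M.mulVec v = 0 from hv, neg_zero, Set.ncard_eq_zero]
    exact Set.eq_empty_of_forall_notMem fun s hs => map_ne_zero_of_mem_signedBasis hcol0 hs.1 hs.2.2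
  · by_cases hvN : M.mulVec v ∈ N
    · rw [hneighbours, ncard_setOf_map_eq_neg (fun _ => neg_mem_signedBasis),
        ncard_setOf_mem_signedBasis_map_eq hcolN ((hNhalf _ hv).1 hvN)]
      simpa only [hcol] using hmult _ hvN
    · have hnegvN : -M.mulVec v ∈ N := not_not.1 (mt (hNhalf _ hv).2 hvN)
      rw [hneighbours, ncard_setOf_mem_signedBasis_map_eq hcolN (by rwa [neg_neg])]
      simpa only [hcol] using hmult _ hnegvN

theorem stmt19 (p n t k : ℕ) (hp : p.Prime) (hpodd : Odd p)
    (ht1 : 1 ≤ t) (ht2 : t ≤ n - 1) (hk : 1 ≤ k) (hnk : 2 * n = (p ^ t - 1) * k)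
    (M : Matrix (Fin t) (Fin n) (ZMod p)) (hrank : M.rank = t)
    (N : Set (Fin t → ZMod p)) (hN0 : (0 : Fin t → ZMod p) ∉ N)
    (hNcard : N.ncard = (p ^ t - 1) / 2)
    (hNhalf : ∀ u : Fin t → ZMod p, u ≠ 0 → (u ∈ N ↔ -u ∉ N))
    (hcols : ∀ j : Fin n, (fun i => M i j) ∈ N)
    (hmult : ∀ u ∈ N, {j : Fin n | (fun i => M i j) = u}.ncard = k) :
    IsRegularSet (torus p n) {w : Fin n → ZMod p | M.mulVec w = 0} 0 k :=
  stmt19_general p n t k hp ht1 ht2 M N hN0 hNhalf hcols hmult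
end
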